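/- The minimal possible AP over all rankings, with |Rel| = p relevant items among n total, is achieved by placing all relevant items at the bottom, giving AP = (1/p) · Σ_{i=1}^{p} i/(n - p + i). -/

import Mathlib

/-- Number of relevant items among the top `j` positions of the ranking `O`
(positions are 1-based; index `k : Fin n` corresponds to position `k+1`). -/
def relCount {α : Type} [DecidableEq α] {n : ℕ} (O : Fin n → α) (Rel : Finset α)
    (j : ℕ) : ℕ :=
  (Finset.univ.filter (fun k : Fin n => (k : ℕ) < j ∧ O k ∈ Rel)).card

noncomputable def prec {α : Type} [DecidableEq α] {n : ℕ} (O : Fin n → α)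
    (Rel : Finset α) (j : ℕ) : ℝ :=
  (relCount O Rel j : ℝ) / (j : ℝ)

noncomputable def AP {α : Type} [DecidableEq α] {n : ℕ} (O : Fin n → α)
    (Rel : Finset α) : ℝ :=
  (Rel.card : ℝ)⁻¹ *
    ∑ j ∈ Finset.univ.filter (fun j : Fin n => O j ∈ Rel), prec O Rel ((j : ℕ) + 1)

/-!
List the positions of the relevant items increasingly, `e 0 < ⋯ < e (p-1)` (0-based). At
position `e i` exactly `i + 1` relevant items have been seen, so its precision is
`(i + 1) / (e i + 1)`; and the `p - 1 - i` later relevant items need distinct positions after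
`e i`, so `e i ≤ n - p + i`. Comparing the two sums term by term gives the bound, with equality
when the relevant items occupy the last `p` positions.
-/

open Finset

theorem Fin.val_le_sub_add_of_strictMono {p n : ℕ} {f : Fin p → Fin n} (hf : StrictMono f)
    (i : Fin p) : (f i : ℕ) ≤ n - p + i := by
  have hcard : #(Ioi i) ≤ #(Ioi (f i)) :=
    card_le_card_of_injOn f (fun j hj => by simpa using hf (by simpa using hj)) hf.injective.injOn
  rw [Fin.card_Ioi, Fin.card_Ioi] at hcard
  omega

theorem Finset.card_filter_le_orderEmbOfFin {α : Type*} [LinearOrder α] (s : Finset α) {k : ℕ}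
    (h : #s = k) (i : Fin k) : #{x ∈ s | x ≤ s.orderEmbOfFin h i} = i + 1 := by
  have hfilter :
      {x ∈ s | x ≤ s.orderEmbOfFin h i} = (Iic i).map (s.orderEmbOfFin h).toEmbedding := by
    ext x
    simp only [mem_filter, mem_map, mem_Iic, RelEmbedding.coe_toEmbedding]
    constructor
    · rintro ⟨hx, hle⟩
      obtain ⟨j, rfl⟩ : x ∈ Set.range (s.orderEmbOfFin h) := by rwa [range_orderEmbOfFin]
      exact ⟨j, by simpa using hle, rfl⟩
    · rintro ⟨j, hj, rfl⟩
      exact ⟨orderEmbOfFin_mem s h j, by simpa using hj⟩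
  rw [hfilter, card_map, Fin.card_Iic]

theorem Finset.sum_Icc_one_eq_sum_univ_fin {M : Type*} [AddCommMonoid M] (f : ℕ → M) (p : ℕ) :
    ∑ i ∈ Icc 1 p, f i = ∑ i : Fin p, f (i + 1) := by
  rw [← Ico_add_one_right_eq_Icc, sum_Ico_eq_sum_range, add_tsub_cancel_right,
    ← Fin.sum_univ_eq_sum_range (fun i => f (1 + i))]
  simp only [add_comm]

theorem Finset.card_filter_mem_of_bijective {β α : Type*} [Fintype β] [DecidableEq α]
    {f : β → α} (hf : Function.Bijective f) (s : Finset α) : #{b | f b ∈ s} = #s :=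
  card_nbij f (fun b hb => by simpa using hb) hf.injective.injOn
    (fun a ha => by obtain ⟨b, rfl⟩ := hf.surjective a; exact ⟨b, by simpa using ha, rfl⟩)

section

variable {α : Type} [DecidableEq α] {n k : ℕ} (O : Fin n → α) (Rel : Finset α)

theorem relCount_orderEmbOfFin_add_one (h : #{j | O j ∈ Rel} = k) (i : Fin k) :
    relCount O Rel ((({j | O j ∈ Rel} : Finset (Fin n)).orderEmbOfFin h i : ℕ) + 1) = i + 1 := by
  rw [← card_filter_le_orderEmbOfFin _ h i, relCount, filter_filter]
  congr 1
  refine filter_congr fun j _ => ?_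
  rw [Nat.lt_succ_iff, Fin.val_fin_le, and_comm]

theorem AP_eq_sum_orderEmbOfFin (h : #{j | O j ∈ Rel} = #Rel) :
    AP O Rel = (#Rel : ℝ)⁻¹ * ∑ i : Fin #Rel,
      (((i : ℕ) + 1 : ℕ) : ℝ) / (({j | O j ∈ Rel} : Finset (Fin n)).orderEmbOfFin h i + 1 : ℕ) := by
  rw [AP]
  conv_lhs => rw [← map_orderEmbOfFin_univ _ h, sum_map]
  simp only [RelEmbedding.coe_toEmbedding, prec, relCount_orderEmbOfFin_add_one]

end

theorem AP_ge_worst_general {α : Type} [DecidableEq α] {n p : ℕ}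
    (O : Fin n → α) (hO : Function.Bijective O)
    (Rel : Finset α) (hp : Rel.card = p) :
    AP O Rel ≥ (p : ℝ)⁻¹ * ∑ i ∈ Finset.Icc 1 p, (i : ℝ) / ((n - p + i : ℕ) : ℝ) := by
  have hS := card_filter_mem_of_bijective hO Rel
  subst hp
  rw [ge_iff_le, AP_eq_sum_orderEmbOfFin O Rel hS, sum_Icc_one_eq_sum_univ_fin]
  refine mul_le_mul_of_nonneg_left (sum_le_sum fun i _ => ?_) (by positivity)
  have hbound := Fin.val_le_sub_add_of_strictMono (orderEmbOfFin _ hS).strictMono i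
  exact div_le_div_of_nonneg_left (by positivity) (by positivity) (by exact_mod_cast (by omega))

/-- Worst-case AP: for any ranking with p relevant items among n,
AP ≥ (1/p) Σ_{i=1}^p i/(n-p+i), the value attained by placing all relevant
items at the bottom. -/
theorem AP_ge_worst {α : Type} [Fintype α] [DecidableEq α] {n p : ℕ}
    (hn : Fintype.card α = n)
    (O : Fin n → α) (hO : Function.Bijective O)
    (Rel : Finset α) (hp : Rel.card = p) (hp1 : 1 ≤ p) :
    AP O Rel ≥ (p : ℝ)⁻¹ * ∑ i ∈ Finset.Icc 1 p, (i : ℝ) / ((n - p + i : ℕ) : ℝ) :=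
  AP_ge_worst_general O hO Rel hp
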